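/- Fix π ∈ (0,1). For every a < θ₀ the map n ↦ μ_{n, y(n,π)}((−∞,a]) is nonincreasing in n ∈ ℕ, and for every b > θ₀ the map n ↦ μ_{n, y(n,π)}((b,∞)) is nonincreasing in n ∈ ℕ. That is, along a π-level curve the posterior distribution becomes more concentrated around the threshold θ₀. -/

import Mathlib

open MeasureTheory Real Set Filter

/-- The natural parameter domain of the exponential family generated by `ν`. -/
def expDom (ν : Measure ℝ) : Set ℝ :=
  {u : ℝ | Integrable (fun x => Real.exp (u * x)) ν}

/-- The cumulant generating function `B(u) = log ∫ e^{u x} dν(x)`. -/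
noncomputable def cgf (ν : Measure ℝ) (u : ℝ) : ℝ :=
  Real.log (∫ x, Real.exp (u * x) ∂ν)

/-- The (topological) support of a measure: points all of whose neighbourhoods
have nonzero measure. -/
def msupport (μ : MeasureTheory.Measure ℝ) : Set ℝ :=
  {x : ℝ | ∀ U ∈ nhds x, μ U ≠ 0}

/-- The normalizing constant `Z(n,y) = ∫ e^{uy - nB(u)} dμ(u)`. -/
noncomputable def Z (ν μ : Measure ℝ) (n : ℕ) (y : ℝ) : ℝ :=
  ∫ u, Real.exp (u * y - (n : ℝ) * cgf ν u) ∂μ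

/-- The posterior probability `q(n,y) = P(Θ > θ₀ | Y_n = y)`. -/
noncomputable def q (ν μ : Measure ℝ) (θ₀ : ℝ) (n : ℕ) (y : ℝ) : ℝ :=
  (∫ u in Set.Ioi θ₀, Real.exp (u * y - (n : ℝ) * cgf ν u) ∂μ) / Z ν μ n y

/-- The posterior distribution `μ_{n,y}(du) = e^{uy - nB(u)} μ(du) / Z(n,y)`. -/
noncomputable def post (ν μ : Measure ℝ) (n : ℕ) (y : ℝ) : Measure ℝ :=
  (ENNReal.ofReal (Z ν μ n y))⁻¹ •
    μ.withDensity (fun u => ENNReal.ofReal (Real.exp (u * y - (n : ℝ) * cgf ν u)))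

/-! ### Auxiliary lemmas -/

lemma ofReal_exp_rpow (s r : ℝ) :
    ENNReal.ofReal (Real.exp s) ^ r = ENNReal.ofReal (Real.exp (s * r)) := by
  rw [Real.exp_mul, ENNReal.ofReal_rpow_of_pos (Real.exp_pos s)]

lemma aesm_exp (c : ℝ) (ν : Measure ℝ) :
    AEStronglyMeasurable (fun t : ℝ => Real.exp (c * t)) ν :=
  (Real.continuous_exp.comp (continuous_const.mul continuous_id')).aestronglyMeasurable

lemma meas_ofReal_exp (c : ℝ) (ν : Measure ℝ) :
    AEMeasurable (fun t => ENNReal.ofReal (Real.exp (c * t))) ν :=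
  (ENNReal.measurable_ofReal.comp ((Real.continuous_exp.comp
    (continuous_const.mul continuous_id)).measurable)).aemeasurable

lemma lint_lt_top {c : ℝ} {ν : Measure ℝ} (h : Integrable (fun x => Real.exp (c * x)) ν) :
    ∫⁻ t, ENNReal.ofReal (Real.exp (c * t)) ∂ν < ⊤ := by
  have := h.2
  rwa [hasFiniteIntegral_iff_ofReal (Eventually.of_forall fun t => (Real.exp_pos _).le)] at this

/-- Hölder: convexity package for `expDom` and `cgf`. -/
lemma cgf_convex_package (ν : Measure ℝ) {x y a b : ℝ} (hx : x ∈ expDom ν)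
    (hy : y ∈ expDom ν) (ha : 0 < a) (hb : 0 < b) (hab : a + b = 1) :
    a * x + b * y ∈ expDom ν ∧
      cgf ν (a * x + b * y) ≤ a * cgf ν x + b * cgf ν y := by
  have hpq : (1/a).HolderConjugate (1/b) := by
    exact Real.holderConjugate_one_div ha hb hab
  have key := ENNReal.lintegral_mul_le_Lp_mul_Lq ν hpq
    (meas_ofReal_exp (a * x) ν) (meas_ofReal_exp (b * y) ν)
  have hfp : ∀ t : ℝ, ENNReal.ofReal (Real.exp (a * x * t)) ^ (1/a)
      = ENNReal.ofReal (Real.exp (x * t)) := by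
    intro t
    rw [ofReal_exp_rpow]
    congr 1
    field_simp
  have hgq : ∀ t : ℝ, ENNReal.ofReal (Real.exp (b * y * t)) ^ (1/b)
      = ENNReal.ofReal (Real.exp (y * t)) := by
    intro t
    rw [ofReal_exp_rpow]
    congr 1
    field_simp
  have hmul : ∀ t : ℝ, (fun t => ENNReal.ofReal (Real.exp (a * x * t)))  t *
      (fun t => ENNReal.ofReal (Real.exp (b * y * t))) t
      = ENNReal.ofReal (Real.exp ((a * x + b * y) * t)) := by
    intro t
    rw [← ENNReal.ofReal_mul (Real.exp_pos _).le, ← Real.exp_add]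
    ring_nf
  simp only [Pi.mul_apply] at key
  rw [lintegral_congr hmul] at key
  simp_rw [hfp, hgq, one_div, inv_inv] at key
  set A := ∫⁻ t, ENNReal.ofReal (Real.exp (x * t)) ∂ν with hA
  set B := ∫⁻ t, ENNReal.ofReal (Real.exp (y * t)) ∂ν with hB
  have hAlt : A < ⊤ := lint_lt_top hx
  have hBlt : B < ⊤ := lint_lt_top hy
  have hRHSlt : A ^ a * B ^ b < ⊤ :=
    ENNReal.mul_lt_top (ENNReal.rpow_lt_top_of_nonneg ha.le hAlt.ne)
      (ENNReal.rpow_lt_top_of_nonneg hb.le hBlt.ne)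
  have hmid : (a*x + b*y) ∈ expDom ν := by
    refine ⟨aesm_exp _ ν, ?_⟩
    rw [hasFiniteIntegral_iff_ofReal (Eventually.of_forall fun t => (Real.exp_pos _).le)]
    exact lt_of_le_of_lt key hRHSlt
  refine ⟨hmid, ?_⟩
  have hint_eq : ∀ c : ℝ, ∫ t, Real.exp (c * t) ∂ν
      = (∫⁻ t, ENNReal.ofReal (Real.exp (c * t)) ∂ν).toReal := by
    intro c
    rw [integral_eq_lintegral_of_nonneg_ae (Eventually.of_forall fun t => (Real.exp_pos _).le)
      (aesm_exp c ν)]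
  rcases eq_or_ne ν 0 with rfl | hν
  · simp [cgf]
  · have hposint : ∀ c : ℝ, c ∈ expDom ν → 0 < ∫ t, Real.exp (c * t) ∂ν := by
      intro c hc
      rw [integral_pos_iff_support_of_nonneg (fun t => (Real.exp_pos _).le) hc]
      have : Function.support (fun t => Real.exp (c * t)) = univ := by
        ext t; simp [Function.mem_support, (Real.exp_pos (c*t)).ne']
      rw [this]
      simpa [pos_iff_ne_zero] using hν
    have hIx := hposint x hx
    have hIy := hposint y hy
    have hIm := hposint _ hmid
    have hle : ∫ t, Real.exp ((a*x+b*y) * t) ∂ν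
        ≤ (∫ t, Real.exp (x * t) ∂ν) ^ a * (∫ t, Real.exp (y * t) ∂ν) ^ b := by
      rw [hint_eq, hint_eq, hint_eq, ENNReal.toReal_rpow, ENNReal.toReal_rpow,
        ← ENNReal.toReal_mul]
      exact ENNReal.toReal_mono hRHSlt.ne key
    calc cgf ν (a*x+b*y) = Real.log (∫ t, Real.exp ((a*x+b*y) * t) ∂ν) := rfl
      _ ≤ Real.log ((∫ t, Real.exp (x * t) ∂ν) ^ a * (∫ t, Real.exp (y * t) ∂ν) ^ b) :=
          Real.log_le_log hIm hle
      _ = a * cgf ν x + b * cgf ν y := by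
          rw [Real.log_mul (Real.rpow_pos_of_pos hIx a).ne' (Real.rpow_pos_of_pos hIy b).ne',
            Real.log_rpow hIx, Real.log_rpow hIy]
          rfl

lemma msupport_compl_null (μ : Measure ℝ) : μ (msupport μ)ᶜ = 0 := by
  have H : ∀ x : ↥(msupport μ)ᶜ, ∃ U : Set ℝ, IsOpen U ∧ (x : ℝ) ∈ U ∧ μ U = 0 := by
    rintro ⟨x, hx⟩
    simp only [mem_compl_iff, msupport, mem_setOf_eq, not_forall] at hx
    obtain ⟨U, hU, hU0⟩ := hx
    obtain ⟨V, hVU, hV, hxV⟩ := mem_nhds_iff.mp hU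
    exact ⟨V, hV, hxV, measure_mono_null hVU (not_not.mp hU0)⟩
  choose U hUo hUx hU0 using H
  obtain ⟨T, hTc, hTU⟩ := TopologicalSpace.isOpen_iUnion_countable U hUo
  have hsub : (msupport μ)ᶜ ⊆ ⋃ i ∈ T, U i := by
    rw [hTU]; intro x hx; exact mem_iUnion.mpr ⟨⟨x, hx⟩, hUx _⟩
  exact measure_mono_null hsub ((measure_biUnion_null_iff hTc).mpr fun i _ => hU0 i)

lemma measurable_cgf (ν : Measure ℝ) [SigmaFinite ν] : Measurable (cgf ν) := by
  have h1 : StronglyMeasurable (fun p : ℝ × ℝ => Real.exp (p.1 * p.2)) :=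
    (Real.continuous_exp.comp (continuous_fst.mul continuous_snd)).stronglyMeasurable
  have h2 := h1.integral_prod_right' (ν := ν)
  exact Real.measurable_log.comp h2.measurable

lemma key_compare (μ : Measure ℝ) (θ₀ : ℝ) (D : ℝ → ℝ) (S : Set ℝ)
    (hS : S.OrdConnected) (hD : Integrable D μ)
    (hIoi : ∫ u in Ioi θ₀, D u ∂μ = 0) (hIic : ∫ u in Iic θ₀, D u ∂μ = 0)
    (h0 : μ (Ioi θ₀) ≠ 0) (h1 : μ (Iic θ₀) ≠ 0)
    (hae : ∀ᵐ u ∂μ, (u ∈ S → 0 ≤ D u) ∧ (u ∉ S → D u < 0)) :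
    (∀ a ≤ θ₀, ∫ u in Iic a, D u ∂μ ≤ 0) ∧
      (∀ b, θ₀ ≤ b → ∫ u in Ioi b, D u ∂μ ≤ 0) := by
  have zero_of_neg : ∀ s : Set ℝ, MeasurableSet s → (∀ᵐ u ∂μ, u ∈ s → D u < 0) →
      (∫ u in s, D u ∂μ = 0) → μ s = 0 := by
    intro s hs hneg hz
    have hneg' : ∀ᵐ u ∂μ.restrict s, D u < 0 := (ae_restrict_iff' hs).mpr hneg
    have hz' : ∫ u in s, -D u ∂μ = 0 := by rw [integral_neg, hz, neg_zero]
    have h0' : (fun u => -D u) =ᵐ[μ.restrict s] 0 :=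
      (integral_eq_zero_iff_of_nonneg_ae (hneg'.mono fun u hu => neg_nonneg.mpr hu.le)
        (hD.restrict.neg)).mp hz'
    have : ∀ᵐ u ∂μ.restrict s, False := by
      filter_upwards [hneg', h0'] with u h1 h2
      simp only [Pi.zero_apply, neg_eq_zero] at h2
      exact absurd h2 h1.ne
    have := ae_eq_bot.mp (Filter.eventually_false_iff_eq_bot.mp this)
    rw [← Measure.restrict_apply_univ, this]; rfl
  constructor
  · intro a ha
    by_cases hx : ∃ x ∈ S, x ≤ a
    · obtain ⟨x, hxS, hxa⟩ := hx
      by_cases hzc : ∃ z ∈ S, θ₀ ≤ z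
      · obtain ⟨z, hzS, hz0⟩ := hzc
        have hnn : 0 ≤ ∫ u in Ioc a θ₀, D u ∂μ :=
          setIntegral_nonneg_ae measurableSet_Ioc (hae.mono fun u hu hm =>
            hu.1 (hS.out hxS hzS ⟨hxa.trans hm.1.le, hm.2.trans hz0⟩))
        have hsplit : (∫ u in Iic a, D u ∂μ) + ∫ u in Ioc a θ₀, D u ∂μ
            = ∫ u in Iic θ₀, D u ∂μ := by
          rw [← setIntegral_union (Iic_disjoint_Ioc le_rfl) measurableSet_Ioc
            hD.integrableOn hD.integrableOn, Iic_union_Ioc_eq_Iic ha]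
        linarith
      · push_neg at hzc
        have : ∀ᵐ u ∂μ, u ∈ Ioi θ₀ → D u < 0 := hae.mono fun u hu hm =>
          hu.2 fun huS => absurd (hzc u huS) (not_lt.mpr (le_of_lt hm))
        exact absurd (zero_of_neg _ measurableSet_Ioi this hIoi) h0
    · push_neg at hx
      refine setIntegral_nonpos_of_ae_restrict ((ae_restrict_iff' measurableSet_Iic).mpr ?_)
      exact hae.mono fun u hu hm => (hu.2 fun huS => absurd hm (not_le.mpr (hx u huS))).le
  · intro b hb
    by_cases hzc : ∃ z ∈ S, b ≤ z
    · obtain ⟨z, hzS, hbz⟩ := hzc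
      by_cases hx : ∃ x ∈ S, x ≤ θ₀
      · obtain ⟨x, hxS, hx0⟩ := hx
        have hnn : 0 ≤ ∫ u in Ioc θ₀ b, D u ∂μ :=
          setIntegral_nonneg_ae measurableSet_Ioc (hae.mono fun u hu hm =>
            hu.1 (hS.out hxS hzS ⟨hx0.trans hm.1.le, hm.2.trans hbz⟩))
        have hsplit : (∫ u in Ioc θ₀ b, D u ∂μ) + ∫ u in Ioi b, D u ∂μ
            = ∫ u in Ioi θ₀, D u ∂μ := by
          rw [← setIntegral_union Ioc_disjoint_Ioi_same measurableSet_Ioi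
            hD.integrableOn hD.integrableOn, Ioc_union_Ioi_eq_Ioi hb]
        linarith
      · push_neg at hx
        have : ∀ᵐ u ∂μ, u ∈ Iic θ₀ → D u < 0 := hae.mono fun u hu hm =>
          hu.2 fun huS => absurd hm (not_le.mpr (hx u huS))
        exact absurd (zero_of_neg _ measurableSet_Iic this hIic) h1
    · push_neg at hzc
      refine setIntegral_nonpos_of_ae_restrict ((ae_restrict_iff' measurableSet_Ioi).mpr ?_)
      exact hae.mono fun u hu hm => (hu.2 fun huS => absurd (hzc u huS) (not_lt.mpr hm.le)).le

lemma post_apply (ν μ : Measure ℝ) (n : ℕ) (y : ℝ) {s : Set ℝ} (hs : MeasurableSet s)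
    (hZ : 0 < Z ν μ n y)
    (hI : Integrable (fun u => Real.exp (u * y - (n : ℝ) * cgf ν u)) μ) :
    post ν μ n y s
      = ENNReal.ofReal ((∫ u in s, Real.exp (u * y - (n : ℝ) * cgf ν u) ∂μ) / Z ν μ n y) := by
  have hF : 0 ≤ ∫ u in s, Real.exp (u * y - (n : ℝ) * cgf ν u) ∂μ :=
    integral_nonneg fun u => (Real.exp_pos _).le
  rw [post, Measure.smul_apply, smul_eq_mul, withDensity_apply _ hs,
    ← ofReal_integral_eq_lintegral_ofReal hI.restrict
      (Eventually.of_forall fun u => (Real.exp_pos _).le),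
    div_eq_mul_inv, ENNReal.ofReal_mul hF, ENNReal.ofReal_inv_of_pos hZ, mul_comm]


/-- Core comparison step between two consecutive posteriors along the level curve. -/
lemma step_core (ν μ : Measure ℝ) [IsProbabilityMeasure μ] (θ₀ p c y₁ y₂ Z₁ Z₂ : ℝ)
    (hae_dom : ∀ᵐ u ∂μ, u ∈ expDom ν)
    (h0' : μ (Ioi θ₀) ≠ 0) (h1' : μ (Iic θ₀) ≠ 0)
    (hInt₁ : Integrable (fun u => Real.exp (u * y₁ - c * cgf ν u)) μ)
    (hInt₂ : Integrable (fun u => Real.exp (u * y₂ - (c + 1) * cgf ν u)) μ)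
    (hZ₁pos : 0 < Z₁) (hZ₂pos : 0 < Z₂)
    (hZ₁ : ∫ u, Real.exp (u * y₁ - c * cgf ν u) ∂μ = Z₁)
    (hZ₂ : ∫ u, Real.exp (u * y₂ - (c + 1) * cgf ν u) ∂μ = Z₂)
    (hq₁ : ∫ u in Ioi θ₀, Real.exp (u * y₁ - c * cgf ν u) ∂μ = p * Z₁)
    (hq₂ : ∫ u in Ioi θ₀, Real.exp (u * y₂ - (c + 1) * cgf ν u) ∂μ = p * Z₂) :
    (∀ a ≤ θ₀, (∫ u in Iic a, Real.exp (u * y₂ - (c + 1) * cgf ν u) ∂μ) * Z₁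
        ≤ (∫ u in Iic a, Real.exp (u * y₁ - c * cgf ν u) ∂μ) * Z₂) ∧
    (∀ b, θ₀ ≤ b → (∫ u in Ioi b, Real.exp (u * y₂ - (c + 1) * cgf ν u) ∂μ) * Z₁
        ≤ (∫ u in Ioi b, Real.exp (u * y₁ - c * cgf ν u) ∂μ) * Z₂) := by
  classical
  set D : ℝ → ℝ := fun u =>
    Real.exp (u * y₂ - (c + 1) * cgf ν u) * Z₁
      - Real.exp (u * y₁ - c * cgf ν u) * Z₂ with hD
  set S : Set ℝ :=
    {u | u ∈ expDom ν ∧ Real.log (Z₂ / Z₁) ≤ u * (y₂ - y₁) - cgf ν u} with hSdef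
  have hDfact : ∀ u, D u = Real.exp (u * y₁ - c * cgf ν u)
      * (Real.exp (u * (y₂ - y₁) - cgf ν u) * Z₁ - Z₂) := by
    intro u
    have he : Real.exp (u * y₂ - (c + 1) * cgf ν u)
        = Real.exp (u * y₁ - c * cgf ν u) * Real.exp (u * (y₂ - y₁) - cgf ν u) := by
      rw [← Real.exp_add]; congr 1; ring
    rw [hD]
    simp only
    rw [he]
    ring
  have hSconv : Convex ℝ S := by
    intro x hx z hz a b ha hb hab
    simp only [smul_eq_mul]
    rcases ha.eq_or_lt with rfl | ha'
    · have hb1 : b = 1 := by linarith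
      subst hb1
      simpa using hz
    rcases hb.eq_or_lt with rfl | hb'
    · have ha1 : a = 1 := by linarith
      subst ha1
      simpa using hx
    obtain ⟨hxd, hxl⟩ := hx
    obtain ⟨hzd, hzl⟩ := hz
    obtain ⟨hmem, hineq⟩ := cgf_convex_package ν hxd hzd ha' hb' hab
    refine ⟨hmem, ?_⟩
    have e1 : a * Real.log (Z₂ / Z₁) ≤ a * (x * (y₂ - y₁) - cgf ν x) :=
      mul_le_mul_of_nonneg_left hxl ha'.le
    have e2 : b * Real.log (Z₂ / Z₁) ≤ b * (z * (y₂ - y₁) - cgf ν z) :=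
      mul_le_mul_of_nonneg_left hzl hb'.le
    have e3 : a * Real.log (Z₂ / Z₁) + b * Real.log (Z₂ / Z₁) = Real.log (Z₂ / Z₁) := by
      rw [← add_mul, hab, one_mul]
    linarith
  have hS : S.OrdConnected := hSconv.ordConnected
  have hDint : Integrable D μ := (hInt₂.mul_const Z₁).sub (hInt₁.mul_const Z₂)
  have hIoi0 : ∫ u in Ioi θ₀, D u ∂μ = 0 := by
    rw [hD]
    simp only
    rw [integral_sub (hInt₂.mul_const Z₁).integrableOn (hInt₁.mul_const Z₂).integrableOn,
      integral_mul_const, integral_mul_const, hq₁, hq₂]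
    ring
  have htot : ∫ u, D u ∂μ = 0 := by
    rw [hD]
    simp only
    rw [integral_sub (hInt₂.mul_const Z₁) (hInt₁.mul_const Z₂),
      integral_mul_const, integral_mul_const, hZ₁, hZ₂]
    ring
  have hIic0 : ∫ u in Iic θ₀, D u ∂μ = 0 := by
    have hsplit := integral_add_compl (s := Ioi θ₀) measurableSet_Ioi hDint
    rw [compl_Ioi] at hsplit
    linarith
  have hae : ∀ᵐ u ∂μ, (u ∈ S → 0 ≤ D u) ∧ (u ∉ S → D u < 0) := by
    filter_upwards [hae_dom] with u hu
    constructor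
    · rintro ⟨-, hlog⟩
      have hexp : Z₂ / Z₁ ≤ Real.exp (u * (y₂ - y₁) - cgf ν u) := by
        rw [← Real.exp_log (div_pos hZ₂pos hZ₁pos)]
        exact Real.exp_le_exp.mpr hlog
      have h2 : Z₂ ≤ Real.exp (u * (y₂ - y₁) - cgf ν u) * Z₁ :=
        (div_le_iff₀ hZ₁pos).mp hexp
      rw [hDfact u]
      exact mul_nonneg (Real.exp_pos _).le (by linarith)
    · intro huS
      have hlt : u * (y₂ - y₁) - cgf ν u < Real.log (Z₂ / Z₁) := by
        by_contra hcon
        exact huS ⟨hu, not_lt.mp hcon⟩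
      have hexp : Real.exp (u * (y₂ - y₁) - cgf ν u) < Z₂ / Z₁ := by
        rw [← Real.exp_log (div_pos hZ₂pos hZ₁pos)]
        exact Real.exp_lt_exp.mpr hlt
      have h2 : Real.exp (u * (y₂ - y₁) - cgf ν u) * Z₁ < Z₂ :=
        (lt_div_iff₀ hZ₁pos).mp hexp
      rw [hDfact u]
      exact mul_neg_of_pos_of_neg (Real.exp_pos _) (by linarith)
  obtain ⟨hA, hB⟩ := key_compare μ θ₀ D S hS hDint hIoi0 hIic0 h0' h1' hae
  constructor
  · intro a ha
    have hk := hA a ha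
    rw [hD] at hk
    simp only at hk
    rw [integral_sub (hInt₂.mul_const Z₁).integrableOn (hInt₁.mul_const Z₂).integrableOn,
      integral_mul_const, integral_mul_const] at hk
    linarith
  · intro b hb
    have hk := hB b hb
    rw [hD] at hk
    simp only at hk
    rw [integral_sub (hInt₂.mul_const Z₁).integrableOn (hInt₁.mul_const Z₂).integrableOn,
      integral_mul_const, integral_mul_const] at hk
    linarith

/-- Concentration of the posterior distribution along a `p`-level curve: for
`a < θ₀` the map `n ↦ μ_{n,y(n,p)}((-∞,a])` is nonincreasing, and for `b > θ₀`
the map `n ↦ μ_{n,y(n,p)}((b,∞))` is nonincreasing. -/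
theorem posterior_concentration (ν μ : Measure ℝ) [SigmaFinite ν]
    [IsProbabilityMeasure μ] (θ₀ : ℝ) (Y : ℕ → ℝ → ℝ)
    (hsupp : msupport μ ⊆ interior (expDom ν))
    (h0 : 0 < μ (Set.Ioi θ₀)) (h1 : μ (Set.Ioi θ₀) < 1)
    (hint : ∀ (n : ℕ) (y : ℝ),
      Integrable (fun u => (1 + |u|) * Real.exp (u * y - (n : ℝ) * cgf ν u)) μ)
    (hY : ∀ (n : ℕ), ∀ p ∈ Set.Ioo (0 : ℝ) 1, q ν μ θ₀ n (Y n p) = p)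
    (p : ℝ) (hp : p ∈ Set.Ioo (0 : ℝ) 1) :
    (∀ a < θ₀, Antitone (fun n : ℕ => post ν μ n (Y n p) (Set.Iic a))) ∧
    (∀ b > θ₀, Antitone (fun n : ℕ => post ν μ n (Y n p) (Set.Ioi b))) := by
  obtain ⟨hp0, hp1⟩ := hp
  have hmeas : ∀ (n : ℕ) (y : ℝ),
      Measurable (fun u : ℝ => Real.exp (u * y - (n : ℝ) * cgf ν u)) := fun n y =>
    ((measurable_id.mul_const y).sub ((measurable_cgf ν).const_mul _)).exp
  have hInt : ∀ (n : ℕ) (y : ℝ),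
      Integrable (fun u : ℝ => Real.exp (u * y - (n : ℝ) * cgf ν u)) μ := by
    intro n y
    refine (hint n y).mono' (hmeas n y).aestronglyMeasurable ?_
    refine Eventually.of_forall fun u => ?_
    rw [Real.norm_eq_abs, abs_of_pos (Real.exp_pos _)]
    exact le_mul_of_one_le_left (Real.exp_pos _).le (by linarith [abs_nonneg u])
  have hZpos : ∀ (n : ℕ) (y : ℝ), 0 < Z ν μ n y := by
    intro n y
    refine (integral_pos_iff_support_of_nonneg (fun u => (Real.exp_pos _).le)
      (hInt n y)).mpr ?_
    have huniv : Function.support (fun u : ℝ => Real.exp (u * y - (n : ℝ) * cgf ν u))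
        = univ := by
      ext u; simp [Function.mem_support, (Real.exp_pos _).ne']
    rw [huniv]
    simp
  have hq : ∀ n : ℕ, ∫ u in Ioi θ₀, Real.exp (u * Y n p - (n : ℝ) * cgf ν u) ∂μ
      = p * Z ν μ n (Y n p) := by
    intro n
    have := hY n p ⟨hp0, hp1⟩
    rw [q, div_eq_iff (hZpos n (Y n p)).ne'] at this
    exact this
  have hae_dom : ∀ᵐ u ∂μ, u ∈ expDom ν := by
    refine (ae_iff).mpr (measure_mono_null ?_ (msupport_compl_null μ))
    intro u hu hmem
    exact hu (interior_subset (hsupp hmem))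
  have h0' : μ (Ioi θ₀) ≠ 0 := h0.ne'
  have h1' : μ (Iic θ₀) ≠ 0 := by
    intro hcontra
    have : μ (Ioi θ₀) = 1 := by
      have := prob_compl_eq_one_sub (μ := μ) (s := Iic θ₀) measurableSet_Iic
      rw [compl_Iic] at this
      rw [this, hcontra, tsub_zero]
    exact absurd (this ▸ h1) (lt_irrefl _)
  have hcast : ∀ n : ℕ, (((n + 1 : ℕ) : ℝ)) = (n : ℝ) + 1 := by
    intro n; push_cast; ring
  have hInt' : ∀ n : ℕ,
      Integrable (fun u : ℝ => Real.exp (u * Y (n+1) p - ((n : ℝ) + 1) * cgf ν u)) μ := by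
    intro n
    have := hInt (n+1) (Y (n+1) p)
    rwa [hcast n] at this
  have hZeq : ∀ n : ℕ, ∫ u, Real.exp (u * Y (n+1) p - ((n : ℝ) + 1) * cgf ν u) ∂μ
      = Z ν μ (n+1) (Y (n+1) p) := by
    intro n
    rw [Z, hcast n]
  have hq' : ∀ n : ℕ, ∫ u in Ioi θ₀, Real.exp (u * Y (n+1) p - ((n : ℝ) + 1) * cgf ν u) ∂μ
      = p * Z ν μ (n+1) (Y (n+1) p) := by
    intro n
    have := hq (n+1)
    rwa [hcast n] at this
  have hstep := fun n : ℕ => step_core ν μ θ₀ p (n : ℝ) (Y n p) (Y (n+1) p)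
    (Z ν μ n (Y n p)) (Z ν μ (n+1) (Y (n+1) p)) hae_dom h0' h1'
    (hInt n (Y n p)) (hInt' n) (hZpos n (Y n p)) (hZpos (n+1) (Y (n+1) p))
    rfl (hZeq n) (hq n) (hq' n)
  constructor
  · intro a ha
    refine antitone_nat_of_succ_le fun n => ?_
    rw [post_apply ν μ (n+1) (Y (n+1) p) measurableSet_Iic (hZpos (n+1) (Y (n+1) p))
        (hInt (n+1) (Y (n+1) p)),
      post_apply ν μ n (Y n p) measurableSet_Iic (hZpos n (Y n p)) (hInt n (Y n p))]
    apply ENNReal.ofReal_le_ofReal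
    rw [div_le_div_iff₀ (hZpos (n+1) (Y (n+1) p)) (hZpos n (Y n p))]
    have := (hstep n).1 a ha.le
    rwa [hcast n]
  · intro b hb
    refine antitone_nat_of_succ_le fun n => ?_
    rw [post_apply ν μ (n+1) (Y (n+1) p) measurableSet_Ioi (hZpos (n+1) (Y (n+1) p))
        (hInt (n+1) (Y (n+1) p)),
      post_apply ν μ n (Y n p) measurableSet_Ioi (hZpos n (Y n p)) (hInt n (Y n p))]
    apply ENNReal.ofReal_le_ofReal
    rw [div_le_div_iff₀ (hZpos (n+1) (Y (n+1) p)) (hZpos n (Y n p))]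
    have := (hstep n).2 b hb.le
    rwa [hcast n]
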